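/- There exists T₀ > 0 such that for every T ≥ T₀, the function E₁(s;T) := Γ(1/(2s)) / (π T^{1/(2s)} (2s−1)) is strictly convex on (1/2, 1). -/

import Mathlib

open Real Set Filter Topology

/-- The efficiency functional `E₁(s;T) = Γ(1/(2s)) / (π T^(1/(2s)) (2s-1))`. -/
noncomputable def E1 (s T : ℝ) : ℝ :=
  Real.Gamma (1/(2*s)) / (π * T^(1/(2*s)) * (2*s-1))

/-- The digamma function `ψ = Γ'/Γ`. -/
noncomputable def rpsi : ℝ → ℝ := fun y => deriv Real.Gamma y / Real.Gamma y

lemma gammaAnalytic : AnalyticOnNhd ℝ Real.Gamma (Ioi (0:ℝ)) := by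
  have hC : AnalyticOnNhd ℂ Complex.Gamma {z : ℂ | 0 < z.re} := by
    refine DifferentiableOn.analyticOnNhd (fun z hz => ?_)
      (isOpen_lt continuous_const Complex.continuous_re)
    refine (Complex.differentiableAt_Gamma z (fun m => ?_)).differentiableWithinAt
    intro h
    rw [h] at hz
    simp only [Set.mem_setOf_eq, Complex.neg_re, Complex.natCast_re] at hz
    have : (0:ℝ) ≤ (m:ℝ) := Nat.cast_nonneg m
    linarith
  intro x hx
  have h1 : AnalyticAt ℝ (fun t : ℝ => (Complex.Gamma (t:ℂ)).re) x := by
    refine (Complex.reCLM.analyticAt _).comp ?_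
    exact ((hC _ (by simpa using hx)).restrictScalars).comp (Complex.ofRealCLM.analyticAt x)
  refine h1.congr ?_
  filter_upwards with t
  rw [Complex.Gamma_ofReal, Complex.ofReal_re]

lemma psiAnalytic {x : ℝ} (hx : 0 < x) : AnalyticAt ℝ rpsi x :=
  (gammaAnalytic.deriv x hx).div (gammaAnalytic x hx) (Real.Gamma_pos_of_pos hx).ne'

lemma hasDerivAt_logGamma {x : ℝ} (hx : 0 < x) :
    HasDerivAt (fun y => Real.log (Real.Gamma y)) (rpsi x) x := by
  have h1 : HasDerivAt Real.Gamma (deriv Real.Gamma x) x :=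
    ((gammaAnalytic x hx).differentiableAt).hasDerivAt
  have h2 := (Real.hasDerivAt_log (Real.Gamma_pos_of_pos hx).ne').comp x h1
  refine h2.congr_deriv ?_
  rw [rpsi, div_eq_inv_mul]

lemma logGamma_nonneg {x : ℝ} (hx : 0 < x) (hx1 : x < 1) : 0 ≤ Real.log (Real.Gamma x) := by
  have hconv : ConvexOn ℝ (Ioi (0:ℝ)) (fun y => Real.log (Real.Gamma y)) :=
    Real.convexOn_log_Gamma
  have h2 : (2:ℝ) ∈ Ioi (0:ℝ) := by norm_num
  have hxm : x ∈ Ioi (0:ℝ) := hx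
  have h2x : (0:ℝ) < 2 - x := by linarith
  have ha : (0:ℝ) < 1/(2-x) := by positivity
  have hb : (0:ℝ) ≤ (1-x)/(2-x) := by
    apply div_nonneg <;> linarith
  have hab : 1/(2-x) + (1-x)/(2-x) = 1 := by
    field_simp
    ring
  have hcomb := hconv.2 hxm h2 ha.le hb hab
  have hpt : (1/(2-x)) • x + ((1-x)/(2-x)) • (2:ℝ) = 1 := by
    simp only [smul_eq_mul]
    field_simp
    ring
  rw [hpt] at hcomb
  have hcomb' : Real.log (Real.Gamma 1)
      ≤ (1/(2-x)) * Real.log (Real.Gamma x) + ((1-x)/(2-x)) * Real.log (Real.Gamma 2) := hcomb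
  rw [Real.Gamma_one, Real.log_one, Real.Gamma_two, Real.log_one, mul_zero, add_zero] at hcomb'
  nlinarith

lemma rpsi_nonpos {x : ℝ} (hx : 0 < x) (hx1 : x < 1) : rpsi x ≤ 0 := by
  have hconv : ConvexOn ℝ (Ioi (0:ℝ)) (fun y => Real.log (Real.Gamma y)) :=
    Real.convexOn_log_Gamma
  have hxm : x ∈ Ioi (0:ℝ) := hx
  have h1 : (1:ℝ) ∈ Ioi (0:ℝ) := by norm_num
  have hslope := hconv.le_slope_of_hasDerivAt hxm h1 hx1 (hasDerivAt_logGamma hx)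
  rw [slope_def_field, Real.Gamma_one, Real.log_one] at hslope
  have hlog := logGamma_nonneg hx hx1
  have h1x : (0:ℝ) < 1 - x := by linarith
  calc rpsi x ≤ (0 - Real.log (Real.Gamma x)) / (1 - x) := hslope
    _ ≤ 0 := by
        apply div_nonpos_of_nonpos_of_nonneg <;> linarith

lemma rpsi_monotoneOn : MonotoneOn rpsi (Ioi (0:ℝ)) := by
  have hconv : ConvexOn ℝ (Ioi (0:ℝ)) (fun y => Real.log (Real.Gamma y)) :=
    Real.convexOn_log_Gamma
  have hmono := hconv.monotoneOn_deriv (fun y hy => (hasDerivAt_logGamma hy).differentiableAt)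
  intro x hx y hy hxy
  have := hmono hx hy hxy
  rwa [(hasDerivAt_logGamma hx).deriv, (hasDerivAt_logGamma hy).deriv] at this

lemma deriv_rpsi_nonneg {x : ℝ} (hx : 0 < x) : 0 ≤ deriv rpsi x := by
  have hd : HasDerivWithinAt rpsi (deriv rpsi x) (Ioi x) x :=
    ((psiAnalytic hx).differentiableAt.hasDerivAt).hasDerivWithinAt
  have ht := (hasDerivWithinAt_iff_tendsto_slope' (notMem_Ioi_self)).mp hd
  refine ge_of_tendsto ht ?_
  filter_upwards [self_mem_nhdsWithin] with t ht'
  have hxt : x < t := ht'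
  rw [slope_def_field]
  apply div_nonneg _ (by linarith)
  have := rpsi_monotoneOn hx (show t ∈ Ioi (0:ℝ) by exact lt_trans hx hxt) hxt.le
  linarith

/-- `G(s) = log Γ(1/(2s)) - c/(2s) - log π - log(2s-1)` where `c = log T`. -/
noncomputable def Gfun (c : ℝ) : ℝ → ℝ := fun s =>
  Real.log (Real.Gamma ((2*s)⁻¹)) - c * (2*s)⁻¹ - Real.log π - Real.log (2*s - 1)

noncomputable def G1 (c : ℝ) : ℝ → ℝ := fun s =>
  (rpsi ((2*s)⁻¹) - c) * (-2 * ((2*s)^2)⁻¹) - 2 * (2*s - 1)⁻¹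

noncomputable def G2 (c : ℝ) : ℝ → ℝ := fun s =>
  deriv rpsi ((2*s)⁻¹) * (-2 * ((2*s)^2)⁻¹) * (-2 * ((2*s)^2)⁻¹)
    + (rpsi ((2*s)⁻¹) - c) * (16*s*(((2*s)^2)^2)⁻¹) + 4 * ((2*s-1)^2)⁻¹

lemma hasDerivAt_inner {x : ℝ} (hx0 : 0 < x) :
    HasDerivAt (fun s : ℝ => (2*s)⁻¹) (-2 * ((2*x)^2)⁻¹) x := by
  have h2x : (2*x) ≠ 0 := by positivity
  have h := ((hasDerivAt_id x).const_mul (2:ℝ)).inv h2x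
  refine h.congr_deriv ?_
  simp only [id]
  field_simp

lemma hasDerivAt_G {c x : ℝ} (hx : x ∈ Ioo (1/2:ℝ) 1) : HasDerivAt (Gfun c) (G1 c x) x := by
  obtain ⟨hxl, hxr⟩ := hx
  have hx0 : 0 < x := by linarith
  have hm : 0 < 2*x - 1 := by linarith
  have hupos : 0 < (2*x)⁻¹ := by positivity
  have hu' := hasDerivAt_inner hx0
  have h1 := (hasDerivAt_logGamma hupos).comp x hu'
  have h2 : HasDerivAt (fun s : ℝ => c * (2*s)⁻¹) (c * (-2 * ((2*x)^2)⁻¹)) x := hu'.const_mul c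
  have hi : HasDerivAt (fun s : ℝ => 2*s - 1) (2*1) x := ((hasDerivAt_id x).const_mul 2).sub_const 1
  have h3 := (Real.hasDerivAt_log hm.ne').comp x hi
  have := ((h1.sub h2).sub_const (Real.log π)).sub h3
  simp only [Function.comp_def] at this
  refine this.congr_deriv ?_
  unfold G1
  ring

lemma hasDerivAt_G1 {c x : ℝ} (hx : x ∈ Ioo (1/2:ℝ) 1) : HasDerivAt (G1 c) (G2 c x) x := by
  obtain ⟨hxl, hxr⟩ := hx
  have hx0 : 0 < x := by linarith
  have h2x : (2*x) ≠ 0 := by positivity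
  have hm : 0 < 2*x - 1 := by linarith
  have hupos : 0 < (2*x)⁻¹ := by positivity
  have hu' := hasDerivAt_inner hx0
  have hψ := ((psiAnalytic hupos).differentiableAt.hasDerivAt).comp x hu'
  have hsq : HasDerivAt (fun s : ℝ => (2*s)^2) (((2:ℕ):ℝ) * (2*x)^1 * (2*1)) x :=
    (((hasDerivAt_id x).const_mul (2:ℝ))).pow 2
  have hv : HasDerivAt (fun s : ℝ => -2 * ((2*s)^2)⁻¹) (16*x*(((2*x)^2)^2)⁻¹) x := by
    have h := (hsq.inv (pow_ne_zero _ h2x)).const_mul (-2 : ℝ)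
    refine h.congr_deriv ?_
    field_simp
    ring
  simp only [Function.comp_def] at hψ
  have ht1 := (hψ.sub_const c).mul hv
  have hi : HasDerivAt (fun s : ℝ => 2*s - 1) (2*1) x := ((hasDerivAt_id x).const_mul 2).sub_const 1
  have ht2 : HasDerivAt (fun s : ℝ => 2 * (2*s - 1)⁻¹) (2 * (-(2*1) / (2*x-1)^2)) x :=
    (hi.inv hm.ne').const_mul 2
  have := ht1.sub ht2
  refine this.congr_deriv ?_
  unfold G2
  have h4 : 4 * ((2*x-1)^2)⁻¹ = -(2 * (-(2*1) / (2*x-1)^2)) := by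
    field_simp
    norm_num
  rw [h4]
  ring

lemma E1_eq {T x : ℝ} (hT : 0 < T) (hx : x ∈ Ioo (1/2:ℝ) 1) :
    E1 x T = Real.exp (Gfun (Real.log T) x) := by
  obtain ⟨h1, h2⟩ := hx
  have hx0 : 0 < x := by linarith
  have hm : 0 < 2*x - 1 := by linarith
  have hu : 0 < (2*x)⁻¹ := by positivity
  have hΓ : 0 < Real.Gamma ((2*x)⁻¹) := Real.Gamma_pos_of_pos hu
  have hrpow : (0:ℝ) < T ^ ((2*x)⁻¹) := Real.rpow_pos_of_pos hT _
  unfold E1 Gfun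
  rw [Real.exp_sub, Real.exp_sub, Real.exp_sub, Real.exp_log hΓ, Real.exp_log hm,
    Real.exp_log Real.pi_pos, ← Real.rpow_def_of_pos hT]
  rw [one_div, div_div, div_div]
  ring

lemma key_ineq (A q a b x : ℝ) (hA : 64 ≤ A) (hq : 0 ≤ q) (ha : 1/4 < a) (hx : x < 1) :
    0 < (-A * (-2*a) - 2*b)^2 + (q * (-2*a) * (-2*a) + (-A) * (16*x*a^2) + 4*b^2) := by
  have h1 : 0 < a := by linarith
  have h2 : (0:ℝ) < A := by linarith
  have h3 : (0:ℝ) < A - 8*x := by linarith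
  nlinarith [sq_nonneg (A*a - 2*b), mul_nonneg hq (sq_nonneg a),
    mul_pos (mul_pos h2 (mul_pos h1 h1)) h3]

theorem stmt9 :
    ∃ T₀ > (0:ℝ), ∀ T ≥ T₀,
      StrictConvexOn ℝ (Set.Ioo (1/2:ℝ) 1) (fun s => E1 s T) := by
  refine ⟨Real.exp 64, Real.exp_pos 64, fun T hT => ?_⟩
  have hT0 : 0 < T := lt_of_lt_of_le (Real.exp_pos 64) hT
  set c := Real.log T with hc_def
  have hc : 64 ≤ c := by
    rw [hc_def, ← Real.log_exp 64]
    exact Real.log_le_log (Real.exp_pos 64) hT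
  have key : StrictConvexOn ℝ (Ioo (1/2:ℝ) 1) (fun s => Real.exp (Gfun c s)) := by
    apply strictConvexOn_of_deriv2_pos (convex_Ioo _ _)
    · intro y hy
      exact ((hasDerivAt_G (c := c) hy).exp).continuousAt.continuousWithinAt
    · intro x hx
      rw [interior_Ioo] at hx
      have hIo : Ioo (1/2:ℝ) 1 ∈ 𝓝 x := (isOpen_Ioo).mem_nhds hx
      have heq : deriv (fun s => Real.exp (Gfun c s)) =ᶠ[𝓝 x]
          (fun y => Real.exp (Gfun c y) * G1 c y) := by
        filter_upwards [hIo] with y hy using ((hasDerivAt_G hy).exp).deriv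
      have hder2 : HasDerivAt (fun y => Real.exp (Gfun c y) * G1 c y)
          (Real.exp (Gfun c x) * G1 c x * G1 c x + Real.exp (Gfun c x) * G2 c x) x :=
        ((hasDerivAt_G hx).exp).mul (hasDerivAt_G1 hx)
      have h2d : deriv^[2] (fun s => Real.exp (Gfun c s)) x
          = Real.exp (Gfun c x) * G1 c x * G1 c x + Real.exp (Gfun c x) * G2 c x := by
        show deriv (deriv (fun s => Real.exp (Gfun c s))) x = _
        rw [Filter.EventuallyEq.deriv_eq heq]
        exact hder2.deriv
      rw [h2d]
      obtain ⟨hxl, hxr⟩ := hx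
      have hx0 : 0 < x := by linarith
      have h2x1 : 1 < 2*x := by linarith
      have hupos : 0 < (2*x)⁻¹ := by positivity
      have hu1 : (2*x)⁻¹ < 1 := by
        rw [inv_lt_one_iff₀]
        right; linarith
      have hψ := rpsi_nonpos hupos hu1
      have hq := deriv_rpsi_nonneg hupos
      have hA : 64 ≤ c - rpsi ((2*x)⁻¹) := by linarith
      have hsqlt : (2*x)^2 < 4 := by nlinarith
      have ha : 1/4 < ((2*x)^2)⁻¹ := by
        rw [show (1:ℝ)/4 = 4⁻¹ by norm_num]
        exact inv_strictAnti₀ (by positivity) hsqlt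
      have hk := key_ineq (c - rpsi ((2*x)⁻¹)) (deriv rpsi ((2*x)⁻¹)) (((2*x)^2)⁻¹)
        ((2*x - 1)⁻¹) x hA hq ha hxr
      have hkey : 0 < (G1 c x)^2 + G2 c x := by
        unfold G1 G2
        have hpow : (((2*x)^2)^2)⁻¹ = (((2*x)^2)⁻¹)^2 := (inv_pow _ _).symm
        have hpow2 : ((2*x - 1)^2)⁻¹ = ((2*x - 1)⁻¹)^2 := (inv_pow _ _).symm
        rw [hpow, hpow2]
        nlinarith [hk]
      have hfact : Real.exp (Gfun c x) * G1 c x * G1 c x + Real.exp (Gfun c x) * G2 c x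
          = Real.exp (Gfun c x) * ((G1 c x)^2 + G2 c x) := by ring
      rw [hfact]
      exact mul_pos (Real.exp_pos _) hkey
  constructor
  · exact convex_Ioo _ _
  · intro p hp q hq hne a b ha hb hab
    have hmem := (convex_Ioo (1/2:ℝ) 1) hp hq ha.le hb.le hab
    simp only [smul_eq_mul] at *
    rw [E1_eq hT0 hp, E1_eq hT0 hq, E1_eq hT0 hmem]
    have := key.2 hp hq hne ha hb hab
    simpa using this
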